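/- Let n ≥ 1 and ε > 0, and let g : [0, ε) → Sym(n, ℝ) be a C⁴ family of symmetric n×n real matrices with g(Ω) invertible for every Ω ∈ [0, ε), satisfying the matrix ODE g̈(Ω) = (1/2) ġ(Ω) g(Ω)⁻¹ ġ(Ω) + Ω⁻¹ ġ(Ω) for all Ω ∈ (0, ε), where dots denote d/dΩ. Set γ := g(0). Then ġ(0) = 0, g⁽³⁾(0) = 0, and g(Ω) = γ + (Ω²/2) g̈(0) + (Ω⁴/16) g̈(0) γ⁻¹ g̈(0) for every Ω ∈ [0, ε). -/

import Mathlib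

/-!
Substituting `P = Ω⁻¹ ġ` turns the ODE into the first-order system `ġ = Ω P`,
`Ṗ = (Ω/2) P g⁻¹ P`, along which `P g⁻¹ P` is conserved: the three terms of its derivative
cancel. The ODE itself forces `ġ(0) = 0`, so `P → g̈(0)` as `Ω → 0⁺`, which identifies the
constant as `K = g̈(0) γ⁻¹ g̈(0)`. Then `Ṗ = (Ω/2) K` and `ġ = Ω P` integrate to
`P = g̈(0) + (Ω²/4) K` and to the de Sitter form of `g`. Finally `g̈ = g̈(0) + (3Ω²/4) K` on
`(0, ε)`, so `g⁽³⁾(0) = 0`.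
-/

open scoped BigOperators Matrix

attribute [local instance] Matrix.normedAddCommGroup Matrix.normedSpace

open Set Filter Topology

section MatrixCalculus

variable {𝕜 : Type*} [NontriviallyNormedField 𝕜] {ι : Type*} [Fintype ι] [DecidableEq ι]
  {f h : 𝕜 → Matrix ι ι 𝕜} {f' h' : Matrix ι ι 𝕜} {s : Set 𝕜} {x : 𝕜}

theorem HasDerivWithinAt.matrix_mul [CompleteSpace 𝕜] (hf : HasDerivWithinAt f f' s x)
    (hh : HasDerivWithinAt h h' s x) :
    HasDerivWithinAt (fun t => f t * h t) (f' * h x + f x * h') s x := by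
  -- the sup norm does not make `Matrix ι ι 𝕜` a normed ring, so `HasDerivWithinAt.mul` is not
  -- available; multiplication is a continuous bilinear map all the same
  let B : Matrix ι ι 𝕜 →L[𝕜] Matrix ι ι 𝕜 →L[𝕜] Matrix ι ι 𝕜 :=
    LinearMap.toContinuousLinearMap
      (LinearMap.toContinuousLinearMap.toLinearMap ∘ₗ LinearMap.mul 𝕜 (Matrix ι ι 𝕜))
  rw [add_comm]
  exact B.hasDerivWithinAt_of_bilinear hf hh

theorem HasDerivAt.matrix_mul [CompleteSpace 𝕜] (hf : HasDerivAt f f' x)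
    (hh : HasDerivAt h h' x) : HasDerivAt (fun t => f t * h t) (f' * h x + f x * h') x :=
  hasDerivWithinAt_univ.mp (hf.hasDerivWithinAt.matrix_mul hh.hasDerivWithinAt)

theorem Filter.Tendsto.matrix_inv {α : Type*} {l : Filter α} {F : α → Matrix ι ι 𝕜}
    {A : Matrix ι ι 𝕜} (hF : Tendsto F l (𝓝 A)) (hA : IsUnit A) :
    Tendsto (fun a => (F a)⁻¹) l (𝓝 A⁻¹) := by
  refine (continuousAt_matrix_inv A ?_).tendsto.comp hF
  rw [Matrix.isUnit_iff_isUnit_det] at hA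
  exact Ring.inverse_eq_inv' (G₀ := 𝕜) ▸ continuousAt_inv₀ hA.ne_zero

theorem HasDerivWithinAt.matrix_inv (hf : HasDerivWithinAt f f' s x) (hx : IsUnit (f x)) :
    HasDerivWithinAt (fun t => (f t)⁻¹) (-((f x)⁻¹ * f' * (f x)⁻¹)) s x := by
  refine hasDerivWithinAt_iff_tendsto_slope.mpr ?_
  have hcont : Tendsto f (𝓝[s \ {x}] x) (𝓝 (f x)) :=
    hf.continuousWithinAt.mono sdiff_subset
  have hunit : ∀ᶠ t in 𝓝[s \ {x}] x, IsUnit (f t) := by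
    have hdet := continuous_id.matrix_det.continuousAt.tendsto.comp hcont
    filter_upwards [hdet.eventually_ne ((Matrix.isUnit_iff_isUnit_det _).mp hx).ne_zero] with t ht
    exact (Matrix.isUnit_iff_isUnit_det _).mpr ht.isUnit
  refine (((hcont.matrix_inv hx).mul (hasDerivWithinAt_iff_tendsto_slope.mp hf)).mul_const
    _).neg.congr' ?_
  filter_upwards [hunit] with t ht
  rw [slope_def_module, slope_def_module, Matrix.inv_sub_inv (iff_of_true ht hx),
    ← neg_sub (f t) (f x), mul_neg, neg_mul, smul_neg, mul_smul_comm, smul_mul_assoc]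

theorem HasDerivAt.matrix_inv (hf : HasDerivAt f f' x) (hx : IsUnit (f x)) :
    HasDerivAt (fun t => (f t)⁻¹) (-((f x)⁻¹ * f' * (f x)⁻¹)) x :=
  hasDerivWithinAt_univ.mp (hf.hasDerivWithinAt.matrix_inv hx)

end MatrixCalculus

section RightLimits

variable {E : Type*} [NormedAddCommGroup E] [NormedSpace ℝ E] {f F Φ F' : ℝ → E} {a b ε : ℝ}
  {c f' v w : E}

theorem eq_of_hasDerivAt_zero_of_tendsto_nhdsGT (hF : ∀ t ∈ Ioo a b, HasDerivAt F 0 t)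
    (hc : Tendsto F (𝓝[>] a) (𝓝 c)) : ∀ t ∈ Ioo a b, F t = c := by
  obtain ⟨k, hk⟩ := isOpen_Ioo.exists_is_const_of_deriv_eq_zero isPreconnected_Ioo
    (fun t ht => (hF t ht).differentiableAt.differentiableWithinAt) (fun t ht => (hF t ht).deriv)
  intro t ht
  have hk' : Tendsto F (𝓝[>] a) (𝓝 k) :=
    tendsto_const_nhds.congr' (eventually_of_mem (Ioo_mem_nhdsGT (ht.1.trans ht.2))
      fun τ hτ => (hk τ hτ).symm)
  rw [hk t ht, tendsto_nhds_unique hk' hc]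

theorem eq_add_of_hasDerivAt_of_tendsto_nhdsGT
    (hF : ∀ t ∈ Ioo a b, HasDerivAt F (F' t) t) (hΦ : ∀ t ∈ Ioo a b, HasDerivAt Φ (F' t) t)
    (hc : Tendsto F (𝓝[>] a) (𝓝 c)) (hΦa : Tendsto Φ (𝓝[>] a) (𝓝 0)) :
    ∀ t ∈ Ioo a b, F t = c + Φ t := by
  have hconst := eq_of_hasDerivAt_zero_of_tendsto_nhdsGT (F := fun t => F t - Φ t)
    (fun t ht => by simpa using (hF t ht).fun_sub (hΦ t ht)) (by simpa using hc.sub hΦa)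
  intro t ht
  rw [← hconst t ht, sub_add_cancel]

theorem eq_add_sq_smul_of_hasDerivAt (hF : ∀ t ∈ Ioo 0 ε, HasDerivAt F ((t / 2) • v) t)
    (hc : Tendsto F (𝓝[>] 0) (𝓝 c)) : ∀ t ∈ Ioo 0 ε, F t = c + (t ^ 2 / 4) • v := by
  have hΦ (t : ℝ) : HasDerivAt (fun t : ℝ => (t ^ 2 / 4) • v) ((t / 2) • v) t :=
    (((hasDerivAt_pow 2 t).div_const 4).smul_const v).congr_deriv (by ring_nf)
  have hΦ0 : Tendsto (fun t : ℝ => (t ^ 2 / 4) • v) (𝓝[>] 0) (𝓝 0) :=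
    ((by fun_prop : Continuous _).tendsto' 0 0 (by simp)).mono_left nhdsWithin_le_nhds
  exact eq_add_of_hasDerivAt_of_tendsto_nhdsGT hF (fun t _ => hΦ t) hc hΦ0

theorem eq_add_sq_smul_add_pow_four_smul_of_hasDerivAt
    (hF : ∀ t ∈ Ioo 0 ε, HasDerivAt F (t • (v + (t ^ 2 / 4) • w)) t)
    (hc : Tendsto F (𝓝[>] 0) (𝓝 c)) :
    ∀ t ∈ Ioo 0 ε, F t = c + (t ^ 2 / 2) • v + (t ^ 4 / 16) • w := by
  have hΦ (t : ℝ) : HasDerivAt (fun t : ℝ => (t ^ 2 / 2) • v + (t ^ 4 / 16) • w)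
      (t • (v + (t ^ 2 / 4) • w)) t := by
    refine ((((hasDerivAt_pow 2 t).div_const 2).smul_const v).add
      (((hasDerivAt_pow 4 t).div_const 16).smul_const w)).congr_deriv ?_
    simp only [smul_add, smul_smul]
    match_scalars <;> ring
  have hΦ0 : Tendsto (fun t : ℝ => (t ^ 2 / 2) • v + (t ^ 4 / 16) • w) (𝓝[>] 0) (𝓝 0) :=
    ((by fun_prop : Continuous _).tendsto' 0 0 (by simp)).mono_left nhdsWithin_le_nhds
  intro t ht
  rw [eq_add_of_hasDerivAt_of_tendsto_nhdsGT hF (fun t _ => hΦ t) hc hΦ0 t ht, add_assoc]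

theorem DifferentiableOn.hasDerivAt_derivWithin_Ico (hf : DifferentiableOn ℝ f (Ico a b))
    {t : ℝ} (ht : t ∈ Ioo a b) : HasDerivAt f (derivWithin f (Ico a b) t) t :=
  (hf t (Ioo_subset_Ico_self ht)).hasDerivWithinAt.hasDerivAt (Ico_mem_nhds ht.1 ht.2)

theorem DifferentiableOn.hasDerivWithinAt_Ioi_derivWithin_Ico
    (hf : DifferentiableOn ℝ f (Ico a b)) (hab : a < b) :
    HasDerivWithinAt f (derivWithin f (Ico a b) a) (Ioi a) a :=
  (hf a (left_mem_Ico.2 hab)).hasDerivWithinAt.mono_of_mem_nhdsWithin (Ico_mem_nhdsGT hab)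

theorem ContinuousOn.tendsto_nhdsGT_of_Ico {α X : Type*} [LinearOrder α] [TopologicalSpace α]
    [OrderTopology α] [TopologicalSpace X] {f : α → X} {a b : α} (hf : ContinuousOn f (Ico a b))
    (hab : a < b) : Tendsto f (𝓝[>] a) (𝓝 (f a)) :=
  (hf a (left_mem_Ico.2 hab)).mono_of_mem_nhdsWithin (Ico_mem_nhdsGT hab)

theorem HasDerivWithinAt.tendsto_inv_smul_nhdsGT (hf : HasDerivWithinAt f f' (Ioi 0) 0)
    (h0 : f 0 = 0) : Tendsto (fun t => t⁻¹ • f t) (𝓝[>] 0) (𝓝 f') := by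
  refine ((hasDerivWithinAt_iff_tendsto_slope' (lt_irrefl 0)).mp hf).congr fun t => ?_
  rw [slope_def_module, h0, sub_zero, sub_zero]

theorem HasDerivWithinAt.eq_zero_of_eventuallyEq_add_sq_smul
    (hf : HasDerivWithinAt f f' (Ioi 0) 0) (heq : ∀ᶠ t in 𝓝[>] 0, f t = f 0 + t ^ 2 • v) :
    f' = 0 := by
  have hq : HasDerivWithinAt (fun t : ℝ => f 0 + t ^ 2 • v) 0 (Ioi 0) 0 := by
    simpa using (((hasDerivAt_pow 2 (0 : ℝ)).smul_const v).const_add (f 0)).hasDerivWithinAt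
  exact (uniqueDiffWithinAt_Ioi 0).eq_deriv _ hf (hq.congr_of_eventuallyEq heq (by simp))

end RightLimits

section PurelyMagnetic

variable {ι : Type*} [Fintype ι] [DecidableEq ι] {g g₁ P : ℝ → Matrix ι ι ℝ} {t ε : ℝ}
  {γ G : Matrix ι ι ℝ}

theorem hasDerivAt_mul_inv_mul_eq_zero (hg : HasDerivAt g (t • P t) t)
    (hP : HasDerivAt P ((t / 2) • (P t * (g t)⁻¹ * P t)) t) (hu : IsUnit (g t)) :
    HasDerivAt (fun τ => P τ * (g τ)⁻¹ * P τ) 0 t := by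
  refine ((hP.matrix_mul (hg.matrix_inv hu)).matrix_mul hP).congr_deriv ?_
  simp only [add_mul, smul_mul_assoc, mul_smul_comm, mul_neg, neg_mul, mul_assoc]
  match_scalars
  ring

theorem mul_inv_mul_eq_of_hasDerivAt_system
    (hg : ∀ t ∈ Ioo 0 ε, HasDerivAt g (t • P t) t)
    (hP : ∀ t ∈ Ioo 0 ε, HasDerivAt P ((t / 2) • (P t * (g t)⁻¹ * P t)) t)
    (hu : ∀ t ∈ Ioo 0 ε, IsUnit (g t)) (hgγ : Tendsto g (𝓝[>] 0) (𝓝 γ)) (hγ : IsUnit γ)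
    (hPG : Tendsto P (𝓝[>] 0) (𝓝 G)) :
    ∀ t ∈ Ioo 0 ε, P t * (g t)⁻¹ * P t = G * γ⁻¹ * G :=
  eq_of_hasDerivAt_zero_of_tendsto_nhdsGT
    (fun t ht => hasDerivAt_mul_inv_mul_eq_zero (hg t ht) (hP t ht) (hu t ht))
    ((hPG.mul (hgγ.matrix_inv hγ)).mul hPG)

structure IsPurelyMagneticOn (g g₁ g₂ : ℝ → Matrix ι ι ℝ) (ε : ℝ) : Prop where
  hasDerivAt : ∀ t ∈ Ioo 0 ε, HasDerivAt g (g₁ t) t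
  hasDerivAt_deriv : ∀ t ∈ Ioo 0 ε, HasDerivAt g₁ (g₂ t) t
  isUnit : ∀ t ∈ Ioo 0 ε, IsUnit (g t)
  ode : ∀ t ∈ Ioo 0 ε, g₂ t = (1 / 2 : ℝ) • (g₁ t * (g t)⁻¹ * g₁ t) + t⁻¹ • g₁ t

namespace IsPurelyMagneticOn

variable {g₂ : ℝ → Matrix ι ι ℝ}

theorem eq_zero_of_tendsto_deriv (hsol : IsPurelyMagneticOn g g₁ g₂ ε) (hε : 0 < ε)
    {a b : Matrix ι ι ℝ} (hg₁ : Tendsto g₁ (𝓝[>] 0) (𝓝 a))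
    (hg₂ : Tendsto g₂ (𝓝[>] 0) (𝓝 b)) (hg : Tendsto g (𝓝[>] 0) (𝓝 γ)) (hγ : IsUnit γ) :
    a = 0 := by
  have hlim : Tendsto (fun t => t • (g₂ t - (1 / 2 : ℝ) • (g₁ t * (g t)⁻¹ * g₁ t)))
      (𝓝[>] 0) (𝓝 0) := by
    simpa using (tendsto_id.mono_left nhdsWithin_le_nhds).smul
      (hg₂.sub (((hg₁.mul (hg.matrix_inv hγ)).mul hg₁).const_smul _))
  refine tendsto_nhds_unique (hg₁.congr' ?_) hlim
  filter_upwards [Ioo_mem_nhdsGT hε] with t ht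
  rw [hsol.ode t ht, add_sub_cancel_left, smul_inv_smul₀ ht.1.ne']

theorem hasDerivAt_inv_smul_deriv (hsol : IsPurelyMagneticOn g g₁ g₂ ε) :
    ∀ t ∈ Ioo 0 ε, HasDerivAt (fun τ => τ⁻¹ • g₁ τ)
      ((t / 2) • (t⁻¹ • g₁ t * (g t)⁻¹ * (t⁻¹ • g₁ t))) t := by
  intro t ht
  refine ((hasDerivAt_inv ht.1.ne').smul (hsol.hasDerivAt_deriv t ht)).congr_deriv ?_
  rw [hsol.ode t ht]
  simp only [smul_add, smul_smul, smul_mul_assoc, mul_smul_comm]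
  match_scalars
  · field_simp
  · field_simp
    ring

theorem inv_smul_deriv_mul_inv_mul_eq (hsol : IsPurelyMagneticOn g g₁ g₂ ε)
    (hgγ : Tendsto g (𝓝[>] 0) (𝓝 γ)) (hγ : IsUnit γ)
    (hG : Tendsto (fun t => t⁻¹ • g₁ t) (𝓝[>] 0) (𝓝 G)) :
    ∀ t ∈ Ioo 0 ε, t⁻¹ • g₁ t * (g t)⁻¹ * (t⁻¹ • g₁ t) = G * γ⁻¹ * G := by
  refine mul_inv_mul_eq_of_hasDerivAt_system (fun t ht => ?_) hsol.hasDerivAt_inv_smul_deriv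
    hsol.isUnit hgγ hγ hG
  rw [smul_inv_smul₀ ht.1.ne']
  exact hsol.hasDerivAt t ht

theorem inv_smul_deriv_eq (hsol : IsPurelyMagneticOn g g₁ g₂ ε)
    (hgγ : Tendsto g (𝓝[>] 0) (𝓝 γ)) (hγ : IsUnit γ)
    (hG : Tendsto (fun t => t⁻¹ • g₁ t) (𝓝[>] 0) (𝓝 G)) :
    ∀ t ∈ Ioo 0 ε, t⁻¹ • g₁ t = G + (t ^ 2 / 4) • (G * γ⁻¹ * G) := by
  refine eq_add_sq_smul_of_hasDerivAt (fun t ht => ?_) hG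
  rw [← hsol.inv_smul_deriv_mul_inv_mul_eq hgγ hγ hG t ht]
  exact hsol.hasDerivAt_inv_smul_deriv t ht

theorem eq_deSitter (hsol : IsPurelyMagneticOn g g₁ g₂ ε) (hgγ : Tendsto g (𝓝[>] 0) (𝓝 γ))
    (hγ : IsUnit γ) (hG : Tendsto (fun t => t⁻¹ • g₁ t) (𝓝[>] 0) (𝓝 G)) :
    ∀ t ∈ Ioo 0 ε, g t = γ + (t ^ 2 / 2) • G + (t ^ 4 / 16) • (G * γ⁻¹ * G) := by
  refine eq_add_sq_smul_add_pow_four_smul_of_hasDerivAt (fun t ht => ?_) hgγ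
  rw [← hsol.inv_smul_deriv_eq hgγ hγ hG t ht, smul_inv_smul₀ ht.1.ne']
  exact hsol.hasDerivAt t ht

theorem deriv_deriv_eq (hsol : IsPurelyMagneticOn g g₁ g₂ ε) (hgγ : Tendsto g (𝓝[>] 0) (𝓝 γ))
    (hγ : IsUnit γ) (hG : Tendsto (fun t => t⁻¹ • g₁ t) (𝓝[>] 0) (𝓝 G)) :
    ∀ t ∈ Ioo 0 ε, g₂ t = G + t ^ 2 • ((3 / 4 : ℝ) • (G * γ⁻¹ * G)) := by
  intro t ht
  have hg₁ : g₁ t = t • (t⁻¹ • g₁ t) := (smul_inv_smul₀ ht.1.ne' _).symm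
  rw [hsol.ode t ht, hsol.inv_smul_deriv_eq hgγ hγ hG t ht, hg₁, smul_mul_assoc, mul_smul_comm,
    smul_mul_assoc, smul_smul, hsol.inv_smul_deriv_mul_inv_mul_eq hgγ hγ hG t ht]
  match_scalars <;> ring

end IsPurelyMagneticOn

end PurelyMagnetic

theorem statement4_general
    (n : ℕ) (ε : ℝ) (hε : 0 < ε)
    (g : ℝ → Matrix (Fin n) (Fin n) ℝ)
    (hg : ContDiffOn ℝ 4 g (Set.Ico 0 ε))
    (hinv : ∀ Ω ∈ Set.Ico (0:ℝ) ε, IsUnit (g Ω))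
    (hODE : ∀ Ω ∈ Set.Ioo (0:ℝ) ε,
      iteratedDerivWithin 2 g (Set.Ico 0 ε) Ω
        = (1/2 : ℝ) • (derivWithin g (Set.Ico 0 ε) Ω * (g Ω)⁻¹
            * derivWithin g (Set.Ico 0 ε) Ω)
          + Ω⁻¹ • derivWithin g (Set.Ico 0 ε) Ω) :
    derivWithin g (Set.Ico 0 ε) 0 = 0 ∧
    iteratedDerivWithin 3 g (Set.Ico 0 ε) 0 = 0 ∧
    ∀ Ω ∈ Set.Ico (0:ℝ) ε,
      g Ω = g 0 + (Ω^2/2) • iteratedDerivWithin 2 g (Set.Ico 0 ε) 0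
        + (Ω^4/16) • (iteratedDerivWithin 2 g (Set.Ico 0 ε) 0 * (g 0)⁻¹
            * iteratedDerivWithin 2 g (Set.Ico 0 ε) 0) := by
  set s := Ico (0 : ℝ) ε
  set g₁ := derivWithin g s
  set g₂ := derivWithin g₁ s
  rw [show iteratedDerivWithin 2 g s = g₂ from funext fun _ => iteratedDerivWithin_eq_iterate]
    at hODE ⊢
  rw [show iteratedDerivWithin 3 g s 0 = derivWithin g₂ s 0 from iteratedDerivWithin_eq_iterate]
  have hs : UniqueDiffOn ℝ s := uniqueDiffOn_Ico 0 ε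
  have hD₀ : DifferentiableOn ℝ g s := hg.differentiableOn (by norm_num)
  have hD₁ : DifferentiableOn ℝ g₁ s :=
    (hg.derivWithin (m := 1) hs (by norm_num)).differentiableOn one_ne_zero
  have hD₂ : DifferentiableOn ℝ g₂ s :=
    ((hg.derivWithin (m := 2) hs (by norm_num)).derivWithin hs le_rfl).differentiableOn one_ne_zero
  have hsol : IsPurelyMagneticOn g g₁ g₂ ε :=
    ⟨fun _ => hD₀.hasDerivAt_derivWithin_Ico, fun _ => hD₁.hasDerivAt_derivWithin_Ico,
      fun t ht => hinv t (Ioo_subset_Ico_self ht), hODE⟩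
  have hγ := hD₀.continuousOn.tendsto_nhdsGT_of_Ico hε
  have hγu : IsUnit (g 0) := hinv 0 (left_mem_Ico.2 hε)
  have hg₁0 : g₁ 0 = 0 := hsol.eq_zero_of_tendsto_deriv hε
    (hD₁.continuousOn.tendsto_nhdsGT_of_Ico hε) (hD₂.continuousOn.tendsto_nhdsGT_of_Ico hε) hγ hγu
  have hG := (hD₁.hasDerivWithinAt_Ioi_derivWithin_Ico hε).tendsto_inv_smul_nhdsGT hg₁0
  refine ⟨hg₁0, ?_, fun t ht => ?_⟩
  · refine (hD₂.hasDerivWithinAt_Ioi_derivWithin_Ico hε).eq_zero_of_eventuallyEq_add_sq_smul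
      (v := (3 / 4 : ℝ) • (g₂ 0 * (g 0)⁻¹ * g₂ 0)) ?_
    filter_upwards [Ioo_mem_nhdsGT hε] with t ht
    exact hsol.deriv_deriv_eq hγ hγu hG t ht
  · rcases ht.1.eq_or_lt with rfl | ht₀
    · simp
    · exact hsol.eq_deSitter hγ hγu hG t ⟨ht₀, ht.2⟩

/-- uniqueness core of Lemma 3.3 of the paper.  A C⁴ family of
invertible symmetric matrices on `[0, ε)` solving the purely-magnetic ODE
`g̈ = (1/2) ġ g⁻¹ ġ + Ω⁻¹ ġ` on `(0, ε)` has `ġ(0) = 0`, `g⁽³⁾(0) = 0` and equals the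
de Sitter normal form `γ + (Ω²/2) g̈(0) + (Ω⁴/16) g̈(0) γ⁻¹ g̈(0)` with `γ = g(0)`. -/
theorem statement4
    (n : ℕ) (hn : 1 ≤ n) (ε : ℝ) (hε : 0 < ε)
    (g : ℝ → Matrix (Fin n) (Fin n) ℝ)
    (hg : ContDiffOn ℝ 4 g (Set.Ico 0 ε))
    (hsym : ∀ Ω ∈ Set.Ico (0:ℝ) ε, (g Ω).IsSymm)
    (hinv : ∀ Ω ∈ Set.Ico (0:ℝ) ε, IsUnit (g Ω))
    (hODE : ∀ Ω ∈ Set.Ioo (0:ℝ) ε,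
      iteratedDerivWithin 2 g (Set.Ico 0 ε) Ω
        = (1/2 : ℝ) • (derivWithin g (Set.Ico 0 ε) Ω * (g Ω)⁻¹
            * derivWithin g (Set.Ico 0 ε) Ω)
          + Ω⁻¹ • derivWithin g (Set.Ico 0 ε) Ω) :
    derivWithin g (Set.Ico 0 ε) 0 = 0 ∧
    iteratedDerivWithin 3 g (Set.Ico 0 ε) 0 = 0 ∧
    ∀ Ω ∈ Set.Ico (0:ℝ) ε,
      g Ω = g 0 + (Ω^2/2) • iteratedDerivWithin 2 g (Set.Ico 0 ε) 0
        + (Ω^4/16) • (iteratedDerivWithin 2 g (Set.Ico 0 ε) 0 * (g 0)⁻¹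
            * iteratedDerivWithin 2 g (Set.Ico 0 ε) 0) :=
  statement4_general n ε hε g hg hinv hODE
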